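/- Let δ be a delay function whose right limit δinf at −δ∞ is finite. Apply the non-forgetful single-history channel algorithm to an input event list, and denote by S_n the output list after the n-th iteration and by S_n|t its restriction to events with time at most t. Then for every t ∈ ℝ there exists N such that S_n|t = S_N|t for all n ≥ N. -/
import Mathlib


open scoped Classical

/-- The value of the last event of an output list (stored in reverse order, the most
recent event first); the implicit initial event is `(−∞, x)`. -/
def lastVal (x : Bool) : List (ℝ × Bool) → Bool
  | [] => x
  | e :: _ => e.2

/-- One iteration of the non-forgetful single-history channel algorithm with delay
function `δ`, limit delay `dinfty = δ∞`, and initial value `x`, processing input event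
`e`.  The state is the output list (in reverse order; the initial event `(−∞, x)` is
implicit) together with the most recent potential output time `r` (`none` = `−∞`). -/
noncomputable def nstep (δ : ℝ → ℝ) (dinfty : ℝ) (x : Bool) :
    List (ℝ × Bool) × Option ℝ → ℝ × Bool → List (ℝ × Bool) × Option ℝ
  | (S, r), e =>
    if e.2 = lastVal x S then (S, r)
    else
      match r with
      | none => ((e.1 + dinfty, e.2) :: S, some (e.1 + dinfty))
      | some rp =>
          if rp < e.1 + δ (e.1 - rp) then
            ((e.1 + δ (e.1 - rp), e.2) :: S, some (e.1 + δ (e.1 - rp)))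
          else (S.tail, some (e.1 + δ (e.1 - rp)))

/-- The state `(S_n, r_{n-1})` after `n` iterations of the non-forgetful algorithm on the
input event list `ev`. -/
noncomputable def nstates (δ : ℝ → ℝ) (dinfty : ℝ) (x : Bool) (ev : ℕ → ℝ × Bool) :
    ℕ → List (ℝ × Bool) × Option ℝ
  | 0 => ([], none)
  | n + 1 => nstep δ dinfty x (nstates δ dinfty x ev n) (ev n)

/-- stabilization of the non-forgetful single-history channel algorithm,
assuming the delay of appended events is bounded below (e.g. the right limit `δinf` of
`δ` at `−δ∞` is finite): for every time `t`, the restriction `S_n|t` of the output list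
to events with time at most `t` is eventually constant. -/
theorem nonforgetful_stabilizes (δ : ℝ → ℝ) (dinfty : ℝ) (x : Bool)
    (hmono : Monotone δ)
    (hlim : Filter.Tendsto δ Filter.atTop (nhds dinfty))
    (hpos : 0 < dinfty)
    (L : ℝ) (hL : ∀ T : ℝ, -dinfty < T → L ≤ δ T)
    (ev : ℕ → ℝ × Bool)
    (hnn : 0 ≤ (ev 0).1)
    (hinc : StrictMono fun n => (ev n).1)
    (htop : Filter.Tendsto (fun n => (ev n).1) Filter.atTop Filter.atTop)
    (halt : ∀ n, (ev (n + 1)).2 ≠ (ev n).2) :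
    ∀ t : ℝ, ∃ N : ℕ, ∀ n : ℕ, N ≤ n →
      ((nstates δ dinfty x ev n).1).filter (fun e => e.1 ≤ t) =
        ((nstates δ dinfty x ev N).1).filter (fun e => e.1 ≤ t) := by
  intro t
  have hdle : ∀ T, δ T ≤ dinfty := fun T => hmono.ge_of_tendsto hlim T
  have hLd : L ≤ dinfty := le_trans (hL 0 (by linarith)) (hdle 0)
  -- invariant: the stored potential time is < next event time + dinfty
  have hinv : ∀ n rp, (nstates δ dinfty x ev n).2 = some rp → rp < (ev n).1 + dinfty := by
    intro n
    induction n with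
    | zero => intro rp h; simp [nstates] at h
    | succ n ih =>
      intro rp h
      have hlt : (ev n).1 < (ev (n + 1)).1 := hinc (Nat.lt_succ_self n)
      rcases hS : nstates δ dinfty x ev n with ⟨S, r⟩
      have hstep : nstates δ dinfty x ev (n + 1) = nstep δ dinfty x (S, r) (ev n) := by
        rw [← hS]; rfl
      rw [hS] at ih
      rw [hstep] at h
      simp only [nstep] at h
      split_ifs at h with h1
      · exact lt_trans (ih rp h) (by linarith)
      · cases r with
        | none =>
          simp only [Option.some.injEq] at h
          subst h; linarith
        | some rp0 =>
          simp only at h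
          split_ifs at h with h2 <;>
          · simp only [Option.some.injEq] at h
            subst h
            have := hdle ((ev n).1 - rp0)
            linarith
  obtain ⟨N, hN⟩ := (htop.eventually_gt_atTop (t - L)).exists_forall_of_atTop
  -- per-step: the filtered list after a step is a suffix of the previous one
  have hstepsuf : ∀ n, N ≤ n →
      ((nstates δ dinfty x ev (n + 1)).1.filter (fun e => e.1 ≤ t)) <:+
      ((nstates δ dinfty x ev n).1.filter (fun e => e.1 ≤ t)) := by
    intro n hn
    rcases hS : nstates δ dinfty x ev n with ⟨S, r⟩
    have hstep : nstates δ dinfty x ev (n + 1) = nstep δ dinfty x (S, r) (ev n) := by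
      rw [← hS]; rfl
    rw [hstep]
    have htn : t - L < (ev n).1 := hN n hn
    simp only [nstep]
    split_ifs with h1
    · exact List.suffix_refl _
    · cases r with
      | none =>
        have hgt : ¬ ((ev n).1 + dinfty ≤ t) := by linarith
        simp only
        rw [List.filter_cons_of_neg (by simpa using hgt)]
      | some rp0 =>
        have hrp : rp0 < (ev n).1 + dinfty := hinv n rp0 (by rw [hS])
        have hdL : L ≤ δ ((ev n).1 - rp0) := hL _ (by linarith)
        have hgt : ¬ ((ev n).1 + δ ((ev n).1 - rp0) ≤ t) := by linarith
        simp only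
        split_ifs with h2
        · simp only
          rw [List.filter_cons_of_neg (by simpa using hgt)]
        · exact (List.tail_suffix S).filter _
  -- chain of suffixes
  have hchain : ∀ m n, N ≤ m → m ≤ n →
      ((nstates δ dinfty x ev n).1.filter (fun e => e.1 ≤ t)) <:+
      ((nstates δ dinfty x ev m).1.filter (fun e => e.1 ≤ t)) := by
    intro m n hm hmn
    induction n, hmn using Nat.le_induction with
    | base => exact List.suffix_refl _
    | succ n hmn ih => exact (hstepsuf n (le_trans hm hmn)).trans ih
  -- lengths stabilize
  set f : ℕ → ℕ := fun n => ((nstates δ dinfty x ev n).1.filter (fun e => e.1 ≤ t)).length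
    with hf
  have hmem : (f N) ∈ Set.range fun k => f (N + k) := ⟨0, by simp⟩
  obtain ⟨k0, hk0⟩ := Nat.sInf_mem (Set.nonempty_of_mem hmem)
  refine ⟨N + k0, fun n hn => ?_⟩
  have hn' : N ≤ n := le_trans (Nat.le_add_right N k0) hn
  have hsuf := hchain (N + k0) n (Nat.le_add_right N k0) hn
  have hlen1 : f n ≤ f (N + k0) := hsuf.length_le
  have hlen2 : f (N + k0) ≤ f n := by
    have hk0' : f (N + k0) = sInf (Set.range fun k => f (N + k)) := hk0
    rw [hk0']
    have : f n ∈ Set.range fun k => f (N + k) := ⟨n - N, by show f (N + (n - N)) = f n; rw [Nat.add_sub_cancel' hn']⟩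
    exact Nat.sInf_le this
  exact hsuf.eq_of_length (le_antisymm hlen1 hlen2)
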